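/- Let G be a connected graph containing P_3 as a subgraph, and let H be a connected graph containing as an isometric subgraph the graph H'_k (k ≥ 2): a path x_1, x_2, ..., x_k with a loop at x_1 and a loop at x_k. Then the direct product G × H is not a median graph. -/
import Mathlib


/-- A graph allowing loops: a symmetric adjacency relation on `V`. -/
structure LoopGraph (V : Type) where
  Adj : V → V → Prop
  symm : ∀ {u v : V}, Adj u v → Adj v u

namespace LoopGraph

variable {V W : Type}

/-- `Walk G u v n` : there is a walk of length `n` from `u` to `v` in `G`. -/
inductive Walk (G : LoopGraph V) : V → V → ℕ → Prop
  | nil (u : V) : Walk G u u 0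
  | cons {u w v : V} {n : ℕ} : G.Adj u w → Walk G w v n → Walk G u v (n + 1)

def Connected (G : LoopGraph V) : Prop := ∀ u v : V, ∃ n : ℕ, G.Walk u v n

/-- Distance: the length of a shortest walk. -/
noncomputable def dist (G : LoopGraph V) (u v : V) : ℕ := sInf {n : ℕ | G.Walk u v n}

/-- `m` lies on a geodesic from `a` to `b`. -/
def Between (G : LoopGraph V) (a m b : V) : Prop :=
  G.dist a m + G.dist m b = G.dist a b

/-- `m` is a median of the triple `a, b, c`. -/
def MedianOf (G : LoopGraph V) (m a b c : V) : Prop :=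
  G.Between a m b ∧ G.Between a m c ∧ G.Between b m c

/-- A median graph: connected, loopless, and every triple of vertices has a
unique median. -/
def IsMedian (G : LoopGraph V) : Prop :=
  (∀ v : V, ¬ G.Adj v v) ∧ G.Connected ∧
    ∀ a b c : V, ∃! m : V, G.MedianOf m a b c

/-- The direct (tensor) product of two graphs with loops. -/
def tensor (G : LoopGraph V) (H : LoopGraph W) : LoopGraph (V × W) where
  Adj p q := G.Adj p.1 q.1 ∧ H.Adj p.2 q.2
  symm h := ⟨G.symm h.1, H.symm h.2⟩

def Bipartite (G : LoopGraph V) : Prop :=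
  ∃ c : V → Bool, ∀ {u v : V}, G.Adj u v → c u ≠ c v

/-- `G` contains `K_{2,3}` as a (not necessarily induced) subgraph. -/
def ContainsK23 (G : LoopGraph V) : Prop :=
  ∃ f : Fin 2 ⊕ Fin 3 → V, Function.Injective f ∧
    ∀ (a : Fin 2) (b : Fin 3), G.Adj (f (Sum.inl a)) (f (Sum.inr b))

end LoopGraph

/-- The path graph on `k` vertices, as a loop graph (no loops). -/
def pathLG (k : ℕ) : LoopGraph (Fin k) where
  Adj i j := i.val + 1 = j.val ∨ j.val + 1 = i.val
  symm h := h.symm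

/-- `E_l`: the path on `l` vertices `x_1, …, x_l` with a loop at the end vertex `x_1`. -/
def ELoopPath (l : ℕ) : LoopGraph (Fin l) where
  Adj i j := i.val + 1 = j.val ∨ j.val + 1 = i.val ∨ (i.val = 0 ∧ j.val = 0)
  symm h := by tauto

namespace LoopGraph
variable {V W : Type} {G : LoopGraph V} {H : LoopGraph W}

theorem Walk.cast {u v : V} {m n : ℕ} (w : G.Walk u v m) (h : m = n) : G.Walk u v n := h ▸ w

theorem walk_zero {u v : V} (w : G.Walk u v 0) : u = v := by cases w; rfl

theorem Walk.single {u v : V} (h : G.Adj u v) : G.Walk u v 1 := .cons h (.nil v)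

theorem walk_append {u v w : V} {m n : ℕ} (w1 : G.Walk u v m) (w2 : G.Walk v w n) :
    G.Walk u w (n + m) := by
  induction w1 generalizing w with
  | nil => exact w2
  | cons h _ ih => exact .cons h (ih w2)

theorem walk_reverse {u v : V} {n : ℕ} (w : G.Walk u v n) : G.Walk v u n := by
  induction w with
  | cons h _ ih => exact (walk_append ih (Walk.single (G.symm h))).cast (by omega)
  | nil => exact .nil _

theorem dist_le {u v : V} {n : ℕ} (w : G.Walk u v n) : G.dist u v ≤ n := Nat.sInf_le w

theorem walk_dist {u v : V} (h : ∃ n, G.Walk u v n) : G.Walk u v (G.dist u v) := Nat.sInf_mem h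

theorem dist_symm (G : LoopGraph V) (u v : V) : G.dist u v = G.dist v u := by
  unfold dist
  congr 1
  ext n
  exact ⟨fun w => walk_reverse w, fun w => walk_reverse w⟩

theorem dist_eq {u v : V} {n : ℕ} (w : G.Walk u v n) (lb : ∀ m, G.Walk u v m → n ≤ m) :
    G.dist u v = n := le_antisymm (dist_le w) (lb _ (walk_dist ⟨n, w⟩))

theorem walk_parity {c : V → Bool} (hc : ∀ {a b : V}, G.Adj a b → c a ≠ c b)
    {u v : V} {n : ℕ} (w : G.Walk u v n) : (c u = c v) ↔ Even n := by
  induction w with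
  | nil => simp
  | @cons u w' v n h wtail ih =>
    have h1 : c u ≠ c w' := hc h
    rw [Nat.even_add_one, ← ih]
    cases hu : c u <;> cases hw : c w' <;> cases hv : c v <;> simp_all

theorem walk_proj₂ {p q : V × W} {n : ℕ} (w : (G.tensor H).Walk p q n) : H.Walk p.2 q.2 n := by
  induction w with
  | nil => exact .nil _
  | cons h _ ih => exact .cons h.2 ih

theorem walk_pair : ∀ {n : ℕ} {g g' : V} {h h' : W},
    G.Walk g g' n → H.Walk h h' n → (G.tensor H).Walk (g, h) (g', h') n := by
  intro n
  induction n with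
  | zero => intro g g' h h' wg wh; cases wg; cases wh; exact .nil _
  | succ n ih =>
    intro g g' h h' wg wh
    cases wg with | cons hadj wg' =>
    cases wh with | cons hadj' wh' =>
    exact .cons ⟨hadj, hadj'⟩ (ih wg' wh')

theorem walk_even {a b : V} (h : G.Adj a b) : ∀ m, G.Walk a a (2 * m) := by
  intro m
  induction m with
  | zero => exact .nil a
  | succ m ih => exact (Walk.cons h (Walk.cons (G.symm h) ih)).cast (by omega)

theorem walk_odd {a b : V} (h : G.Adj a b) (m : ℕ) : G.Walk a b (2 * m + 1) :=
  (walk_append (walk_even h m) (Walk.single h)).cast (by omega)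

theorem bipartite_of_isMedian (G : LoopGraph V) (u0 : V) (h : G.IsMedian) : G.Bipartite := by
  obtain ⟨hloop, hcon, hmed⟩ := h
  refine ⟨fun v => decide (Odd (G.dist u0 v)), ?_⟩
  intro a b hab hcab
  rw [decide_eq_decide, Nat.odd_iff, Nat.odd_iff] at hcab
  have hne : a ≠ b := fun he => hloop a (he ▸ hab)
  have distab : G.dist a b = 1 := by
    refine dist_eq (Walk.single hab) (fun m wm => ?_)
    rcases m with _ | m
    · exact absurd (walk_zero wm) hne
    · omega
  have hd1 : G.dist u0 b ≤ G.dist u0 a + 1 := by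
    have := dist_le (walk_append (walk_dist (hcon u0 a)) (Walk.single hab))
    omega
  have hd2 : G.dist u0 a ≤ G.dist u0 b + 1 := by
    have := dist_le (walk_append (walk_dist (hcon u0 b)) (Walk.single (G.symm hab)))
    omega
  have heq : G.dist u0 a = G.dist u0 b := by omega
  obtain ⟨m, ⟨h1, h2, h3⟩, -⟩ := hmed a b u0
  unfold Between at h1 h2 h3
  rw [distab] at h1
  have hz : G.dist a m = 0 ∨ G.dist m b = 0 := by omega
  rcases hz with hz | hz
  · have ham : a = m := by
      have := walk_dist (hcon a m)
      rw [hz] at this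
      exact walk_zero this
    subst ham
    rw [dist_symm G b a, distab, dist_symm G a u0, dist_symm G b u0] at h3
    omega
  · have hmb : m = b := by
      have := walk_dist (hcon m b)
      rw [hz] at this
      exact walk_zero this
    subst hmb
    rw [distab, dist_symm G m u0, dist_symm G a u0] at h2
    omega

end LoopGraph

/-- If `G` is connected and contains `P₃` as a subgraph, and `H` is connected and
contains as an isometric subgraph the graph `H'_k` (`k ≥ 2`): a path
`x₁, …, x_k` with loops at both end vertices, then `G × H` is not a median
graph.  Isometry is expressed by `dist_H (x_i, x_j) = |i - j|`, the distance
in `H'_k`. -/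
theorem p3_times_H'k_not_median {V W : Type} (G : LoopGraph V) (H : LoopGraph W)
    (hGc : G.Connected) (hHc : H.Connected)
    (hP3 : ∃ v₁ v₂ v₃ : V, v₁ ≠ v₂ ∧ v₂ ≠ v₃ ∧ v₁ ≠ v₃ ∧ G.Adj v₁ v₂ ∧ G.Adj v₂ v₃)
    (k : ℕ) (hk : 2 ≤ k) (x : Fin k → W) (hinj : Function.Injective x)
    (hloop1 : H.Adj (x ⟨0, by omega⟩) (x ⟨0, by omega⟩))
    (hloopk : H.Adj (x ⟨k - 1, by omega⟩) (x ⟨k - 1, by omega⟩))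
    (hpath : ∀ i j : Fin k, (j : ℕ) = (i : ℕ) + 1 → H.Adj (x i) (x j))
    (hiso : ∀ i j : Fin k, H.dist (x i) (x j) = max (i : ℕ) (j : ℕ) - min (i : ℕ) (j : ℕ)) :
    ¬ (G.tensor H).IsMedian := by
  intro hM
  obtain ⟨v₁, v₂, v₃, h12ne, h23ne, h13ne, h12, h23⟩ := hP3
  have hk0 : 0 < k := by omega
  have hk1 : 1 < k := by omega
  have hkL : k - 1 < k := by omega
  obtain ⟨c, hc⟩ := LoopGraph.bipartite_of_isMedian (G.tensor H) (v₁, x ⟨0, hk0⟩) hM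
  obtain ⟨hloop, hcon, hmed⟩ := hM
  -- walks along the path in H
  have hWpath : ∀ (n i j : ℕ) (hi : i < k) (hj : j < k), i + n = j →
      H.Walk (x ⟨i, hi⟩) (x ⟨j, hj⟩) n := by
    intro n
    induction n with
    | zero =>
      intro i j hi hj hij
      have : i = j := by omega
      subst this
      exact .nil _
    | succ n ih =>
      intro i j hi hj hij
      exact .cons (hpath ⟨i, hi⟩ ⟨i + 1, by omega⟩ rfl) (ih (i + 1) j (by omega) hj (by omega))
  -- H walks
  have wH_0L : H.Walk (x ⟨0, hk0⟩) (x ⟨k - 1, hkL⟩) (k - 1) :=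
    hWpath (k - 1) 0 (k - 1) hk0 hkL (by omega)
  have wH_L0 : H.Walk (x ⟨k - 1, hkL⟩) (x ⟨0, hk0⟩) (k - 1) := LoopGraph.walk_reverse wH_0L
  have wH_0L' : H.Walk (x ⟨0, hk0⟩) (x ⟨k - 1, hkL⟩) k :=
    (LoopGraph.Walk.cons hloop1 wH_0L).cast (by omega)
  have wH_L0' : H.Walk (x ⟨k - 1, hkL⟩) (x ⟨0, hk0⟩) k :=
    (LoopGraph.Walk.cons hloopk wH_L0).cast (by omega)
  have wH_1L : H.Walk (x ⟨1, hk1⟩) (x ⟨k - 1, hkL⟩) (k - 1) :=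
    (LoopGraph.walk_append (hWpath (k - 2) 1 (k - 1) hk1 hkL (by omega))
      (LoopGraph.Walk.single hloopk)).cast (by omega)
  have wH_01 : H.Walk (x ⟨0, hk0⟩) (x ⟨1, hk1⟩) 1 :=
    LoopGraph.Walk.single (hpath ⟨0, hk0⟩ ⟨1, hk1⟩ rfl)
  have wH_10 : H.Walk (x ⟨1, hk1⟩) (x ⟨0, hk0⟩) 1 := LoopGraph.walk_reverse wH_01
  have wH_00 : H.Walk (x ⟨0, hk0⟩) (x ⟨0, hk0⟩) 2 :=
    LoopGraph.Walk.cons hloop1 (LoopGraph.Walk.single hloop1)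
  -- H distances
  have hd00 : H.dist (x ⟨0, hk0⟩) (x ⟨0, hk0⟩) = 0 :=
    Nat.le_zero.mp (LoopGraph.dist_le (.nil _))
  have hd01 : H.dist (x ⟨0, hk0⟩) (x ⟨1, hk1⟩) = 1 := by
    rw [hiso ⟨0, hk0⟩ ⟨1, hk1⟩]
    simp only [Fin.val_mk]
    omega
  have hd10 : H.dist (x ⟨1, hk1⟩) (x ⟨0, hk0⟩) = 1 := (H.dist_symm _ _).trans hd01
  have hd0L : H.dist (x ⟨0, hk0⟩) (x ⟨k - 1, hkL⟩) = k - 1 := by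
    rw [hiso ⟨0, hk0⟩ ⟨k - 1, hkL⟩]
    simp only [Fin.val_mk]
    omega
  have hdL0 : H.dist (x ⟨k - 1, hkL⟩) (x ⟨0, hk0⟩) = k - 1 := (H.dist_symm _ _).trans hd0L
  have hd1L : H.dist (x ⟨1, hk1⟩) (x ⟨k - 1, hkL⟩) = k - 2 := by
    rw [hiso ⟨1, hk1⟩ ⟨k - 1, hkL⟩]
    simp only [Fin.val_mk]
    omega
  -- the key distance computation
  have key : ∀ (p q : V × W) (n₀ dH : ℕ), (G.tensor H).Walk p q n₀ →
      H.dist p.2 q.2 = dH → n₀ ≤ dH + 1 → (G.tensor H).dist p q = n₀ := by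
    intro p q n₀ dH w hdH hle
    refine LoopGraph.dist_eq w (fun m wm => ?_)
    have h1 : dH ≤ m := by
      rw [← hdH]
      exact LoopGraph.dist_le (LoopGraph.walk_proj₂ wm)
    have h2 := (LoopGraph.walk_parity hc w).symm.trans (LoopGraph.walk_parity hc wm)
    rw [Nat.even_iff, Nat.even_iff] at h2
    omega
  -- distances not depending on the parity case
  have d_am1 : (G.tensor H).dist (v₁, x ⟨0, hk0⟩) (v₂, x ⟨0, hk0⟩) = 1 :=
    key _ _ 1 0 (LoopGraph.walk_pair (LoopGraph.Walk.single h12) (LoopGraph.Walk.single hloop1))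
      hd00 (by omega)
  have d_m1c : (G.tensor H).dist (v₂, x ⟨0, hk0⟩) (v₃, x ⟨0, hk0⟩) = 1 :=
    key _ _ 1 0 (LoopGraph.walk_pair (LoopGraph.Walk.single h23) (LoopGraph.Walk.single hloop1))
      hd00 (by omega)
  have d_am2 : (G.tensor H).dist (v₁, x ⟨0, hk0⟩) (v₂, x ⟨1, hk1⟩) = 1 :=
    key _ _ 1 1 (LoopGraph.walk_pair (LoopGraph.Walk.single h12) wH_01) hd01 (by omega)
  have d_m2c : (G.tensor H).dist (v₂, x ⟨1, hk1⟩) (v₃, x ⟨0, hk0⟩) = 1 :=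
    key _ _ 1 1 (LoopGraph.walk_pair (LoopGraph.Walk.single h23) wH_10) hd10 (by omega)
  have d_ac : (G.tensor H).dist (v₁, x ⟨0, hk0⟩) (v₃, x ⟨0, hk0⟩) = 2 := by
    have w2 : (G.tensor H).Walk (v₁, x ⟨0, hk0⟩) (v₃, x ⟨0, hk0⟩) 2 :=
      LoopGraph.walk_pair (LoopGraph.Walk.cons h12 (LoopGraph.Walk.single h23)) wH_00
    refine LoopGraph.dist_eq w2 (fun m wm => ?_)
    have h2 := (LoopGraph.walk_parity hc w2).symm.trans (LoopGraph.walk_parity hc wm)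
    rw [Nat.even_iff, Nat.even_iff] at h2
    have h3 : m ≠ 0 := by
      intro hm
      subst hm
      exact h13ne (congrArg Prod.fst (LoopGraph.walk_zero wm))
    omega
  -- the main contradiction, parametrized by the G-endpoint of b
  have main : ∀ bg : V, G.Walk v₁ bg k → G.Walk bg v₃ k → G.Walk v₂ bg (k - 1) → False := by
    intro bg wg1 wg2 wg3
    have d_ab : (G.tensor H).dist (v₁, x ⟨0, hk0⟩) (bg, x ⟨k - 1, hkL⟩) = k :=
      key _ _ k (k - 1) (LoopGraph.walk_pair wg1 wH_0L') hd0L (by omega)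
    have d_bc : (G.tensor H).dist (bg, x ⟨k - 1, hkL⟩) (v₃, x ⟨0, hk0⟩) = k :=
      key _ _ k (k - 1) (LoopGraph.walk_pair wg2 wH_L0') hdL0 (by omega)
    have d_m1b : (G.tensor H).dist (v₂, x ⟨0, hk0⟩) (bg, x ⟨k - 1, hkL⟩) = k - 1 :=
      key _ _ (k - 1) (k - 1) (LoopGraph.walk_pair wg3 wH_0L) hd0L (by omega)
    have d_m2b : (G.tensor H).dist (v₂, x ⟨1, hk1⟩) (bg, x ⟨k - 1, hkL⟩) = k - 1 :=
      key _ _ (k - 1) (k - 2) (LoopGraph.walk_pair wg3 wH_1L) hd1L (by omega)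
    have d_bm1 : (G.tensor H).dist (bg, x ⟨k - 1, hkL⟩) (v₂, x ⟨0, hk0⟩) = k - 1 :=
      ((G.tensor H).dist_symm _ _).trans d_m1b
    have d_bm2 : (G.tensor H).dist (bg, x ⟨k - 1, hkL⟩) (v₂, x ⟨1, hk1⟩) = k - 1 :=
      ((G.tensor H).dist_symm _ _).trans d_m2b
    obtain ⟨m, -, huniq⟩ := hmed (v₁, x ⟨0, hk0⟩) (bg, x ⟨k - 1, hkL⟩) (v₃, x ⟨0, hk0⟩)
    have med1 : (G.tensor H).MedianOf (v₂, x ⟨0, hk0⟩) (v₁, x ⟨0, hk0⟩) (bg, x ⟨k - 1, hkL⟩)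
        (v₃, x ⟨0, hk0⟩) := by
      refine ⟨?_, ?_, ?_⟩ <;> unfold LoopGraph.Between
      · rw [d_am1, d_m1b, d_ab]; omega
      · rw [d_am1, d_m1c, d_ac]
      · rw [d_bm1, d_m1c, d_bc]; omega
    have med2 : (G.tensor H).MedianOf (v₂, x ⟨1, hk1⟩) (v₁, x ⟨0, hk0⟩) (bg, x ⟨k - 1, hkL⟩)
        (v₃, x ⟨0, hk0⟩) := by
      refine ⟨?_, ?_, ?_⟩ <;> unfold LoopGraph.Between
      · rw [d_am2, d_m2b, d_ab]; omega
      · rw [d_am2, d_m2c, d_ac]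
      · rw [d_bm2, d_m2c, d_bc]; omega
    have e1 := huniq _ med1
    have e2 := huniq _ med2
    have hx : x ⟨0, hk0⟩ = x ⟨1, hk1⟩ := congrArg Prod.snd (e1.trans e2.symm)
    simpa using congrArg Fin.val (hinj hx)
  rcases Nat.even_or_odd (k - 1) with hpar | hpar
  · obtain ⟨s, hs⟩ := hpar
    exact main v₂ ((LoopGraph.walk_odd h12 s).cast (by omega))
      ((LoopGraph.walk_odd h23 s).cast (by omega))
      ((LoopGraph.walk_even (G.symm h12) s).cast (by omega))
  · obtain ⟨t, ht⟩ := hpar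
    exact main v₁ ((LoopGraph.walk_even h12 (t + 1)).cast (by omega))
      ((LoopGraph.Walk.cons h12 (LoopGraph.walk_odd h23 t)).cast (by omega))
      ((LoopGraph.walk_odd (G.symm h12) t).cast (by omega))
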